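/- Let φ*_i, i = 1,…,s, be s angles uniformly spaced on the unit circle, and suppose s·Δ > 4π. Then B_SW ⊆ ∪_{i=1}^s B_SW^{(i)}: every angle configuration on Λ_B realizing the event B_SW also realizes B_SW^{(i)} for some i, i.e., there exists an angle θ* such that the deviation variables defined from θ via θ* and φ* = φ*_i satisfy |ϑ_r| < Δ for every r ∈ Λ_B. -/

import Mathlib

open MeasureTheory Real Filter

noncomputable section
open scoped Classical

/-- The torus `T_L = (ℤ/L)²`. -/
abbrev Torus (L : ℕ) := ZMod L × ZMod L

/-- A spin configuration on `T_L`: at each site, an angle, i.e., a point of the circle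
`ℝ/2πℤ` (parametrizing a unit two-component spin). -/
abbrev Cfg (L : ℕ) := Torus L → Real.Angle

instance : Fact ((0 : ℝ) < 2 * π) := ⟨by positivity⟩

/-- Lebesgue measure on the unit circle (total mass `2π`). -/
instance : MeasureSpace Real.Angle :=
  inferInstanceAs (MeasureSpace (AddCircle (2 * π)))

instance : SigmaFinite (volume : Measure Real.Angle) :=
  inferInstanceAs (SigmaFinite (volume : Measure (AddCircle (2 * π))))

/-- The torus Hamiltonian `H_L` of the nnn antiferromagnet. -/
def angleH (L : ℕ) (hL : L ≠ 0) (J γ : ℝ) (θ : Cfg L) : ℝ :=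
  haveI : NeZero L := ⟨hL⟩
  J * ∑ r : Torus L,
      (2 + Real.Angle.cos (θ r - θ (r + (1, 1))) + Real.Angle.cos (θ r - θ (r + (1, -1))))
    + J * γ * ∑ r : Torus L,
        (Real.Angle.cos (θ r - θ (r + (1, 0))) + Real.Angle.cos (θ r - θ (r + (0, 1))))

/-- The partition function `Z_{L,β}` (w.r.t. the product of Lebesgue measures on circles). -/
def Zfull (L : ℕ) (hL : L ≠ 0) (β J γ : ℝ) : ℝ :=
  haveI : NeZero L := ⟨hL⟩
  ∫ θ : Cfg L, Real.exp (-(β * angleH L hL J γ θ))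

/-- The torus Gibbs measure `P_{L,β}`. -/
def gibbs (L : ℕ) (hL : L ≠ 0) (β J γ : ℝ) : Measure (Cfg L) :=
  haveI : NeZero L := ⟨hL⟩
  letI μ : Measure (Cfg L) :=
    volume.withDensity fun θ => ENNReal.ofReal (Real.exp (-(β * angleH L hL J γ θ)))
  (μ Set.univ)⁻¹ • μ

/-- Translation of a configuration by `B·t`, `t ∈ T_{L/B}` (represented by a pair of
naturals); the event `τ_t(A)` is `{θ | shiftT L B t θ ∈ A}`. -/
def shiftT (L B : ℕ) (t : ℕ × ℕ) (θ : Cfg L) : Cfg L :=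
  fun r => θ (r + (((B * t.1 : ℕ) : ZMod L), ((B * t.2 : ℕ) : ZMod L)))

/-- The constrained partition function `Z_{L,β}(A)`; `A` is simultaneously enforced in
all translates of `Λ_B` by vectors from `T_{L/B}`. -/
def Zconstr (L B : ℕ) (hL : L ≠ 0) (β J γ : ℝ) (A : Set (Cfg L)) : ℝ :=
  haveI : NeZero L := ⟨hL⟩
  ∫ θ : Cfg L, Real.exp (-(β * angleH L hL J γ θ)) *
    ∏ t ∈ Finset.range (L / B) ×ˢ Finset.range (L / B),
      (if shiftT L B t θ ∈ A then (1 : ℝ) else 0)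

/-- Membership in the block `Λ_B` of `(B+1) × (B+1)` sites based at the torus origin. -/
def inBlock (L B : ℕ) (r : Torus L) : Prop := r.1.val ≤ B ∧ r.2.val ≤ B

/-- `A` is a reflection-symmetric event in `Λ_B`: it depends only on the spins in `Λ_B`
and is invariant under the reflections of `Λ_B` in the coordinate planes through the
center of `Λ_B`. -/
def IsRS (L B : ℕ) (A : Set (Cfg L)) : Prop :=
  (∀ θ θ' : Cfg L, (∀ r, inBlock L B r → θ r = θ' r) → (θ ∈ A ↔ θ' ∈ A)) ∧
  (∀ θ : Cfg L, θ ∈ A → (fun r : Torus L => θ ((B : ZMod L) - r.1, r.2)) ∈ A) ∧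
  (∀ θ : Cfg L, θ ∈ A → (fun r : Torus L => θ (r.1, (B : ZMod L) - r.2)) ∈ A)

/-- The ground-state offset determined by the overall angle `θ*` and the relative
angle `φ*` between the Néel states of the even and the odd sublattice. -/
def offset (L : ℕ) (θs φs : ℝ) (r : Torus L) : ℝ :=
  if Even r.1.val then (if Even r.2.val then θs else θs + φs + π)
  else (if Even r.2.val then θs + φs else θs + π)

/-- The deviation variables (defined from `θ` via `θ*`, `φ*`) satisfy `|ϑ_r| < Δ`
throughout the block `Λ_B`. -/
def goodDev (L B : ℕ) (Δ θs φs : ℝ) (θ : Cfg L) : Prop :=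
  ∀ r : Torus L, inBlock L B r →
    |(θ r - ((offset L θs φs r : ℝ) : Real.Angle)).toReal| < Δ

/-- The good-block event `G₀` (sublattices aligned: `|φ*| ≤ κ`). -/
def G0 (L B : ℕ) (κ Δ : ℝ) : Set (Cfg L) :=
  {θ | ∃ θs φs : ℝ, |φs| ≤ κ ∧ goodDev L B Δ θs φs θ}

/-- The good-block event `G₁₈₀` (sublattices antialigned: `|φ* - π| ≤ κ`). -/
def G180 (L B : ℕ) (κ Δ : ℝ) : Set (Cfg L) :=
  {θ | ∃ θs φs : ℝ, |φs - π| ≤ κ ∧ goodDev L B Δ θs φs θ}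

/-- The bad-block event `B = (G₀ ∪ G₁₈₀)ᶜ`. -/
def BadEv (L B : ℕ) (κ Δ : ℝ) : Set (Cfg L) := (G0 L B κ Δ ∪ G180 L B κ Δ)ᶜ

/-- The energetically bad event `B_E`: some next-nearest neighbor pair in `Λ_B` has
`||θ_r − θ_{r'}| − π| ≥ Δ/(2B)`. -/
def BE (L B : ℕ) (Δ : ℝ) : Set (Cfg L) :=
  {θ | ∃ r r' : Torus L, inBlock L B r ∧ inBlock L B r' ∧
    (r' = r + (1, 1) ∨ r' = r + (1, -1) ∨ r = r' + (1, 1) ∨ r = r' + (1, -1)) ∧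
    Δ / (2 * (B : ℝ)) ≤ abs (|(θ r - θ r').toReal| - π)}

/-- The entropically bad event `B_SW = B \ B_E`. -/
def BSW (L B : ℕ) (κ Δ : ℝ) : Set (Cfg L) := BadEv L B κ Δ \ BE L B Δ

/-- The event `B_SW^{(i)}`: the block is bad, yet for some `θ*` the deviation variables
defined via `θ*` and `φ* = φᵢ` satisfy `|ϑ_r| < Δ` on `Λ_B`. -/
def BSWi (L B : ℕ) (κ Δ φi : ℝ) : Set (Cfg L) :=
  BadEv L B κ Δ ∩ {θ | ∃ θs : ℝ, goodDev L B Δ θs φi θ}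

/-!
Outside `B_E`, any two diagonal neighbours of `Λ_B` are antiparallel up to `ε = Δ/(2B)`. Choose
`θ*, φ*` so that the deviations vanish at `(0,0)` and `(1,0)`, one site of each diagonal
sublattice. Every site of `Λ_B` is joined to the one of its own sublattice by at most `B` diagonal
steps inside the block, so all deviations are at most `B ε = Δ/2`. Replacing `φ*` by the nearest
angle `2πi/s` changes the deviations on the odd sublattice by at most `π/s < Δ/2`.
-/

namespace Real.Angle

theorem norm_eq_abs_toReal (θ : Angle) : ‖θ‖ = |θ.toReal| := by
  conv_lhs => rw [← θ.coe_toReal]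
  exact (AddCircle.norm_coe_eq_abs_iff (2 * π) two_pi_pos.ne').2
    (by rw [abs_of_pos two_pi_pos]; linarith [θ.abs_toReal_le_pi])

theorem norm_coe_le_abs (x : ℝ) : ‖(x : Angle)‖ ≤ |x| :=
  QuotientAddGroup.norm_mk_le_norm

theorem norm_sub_coe_pi_le (θ : Angle) : ‖θ - π‖ ≤ |(|θ.toReal|) - π| := by
  rcases le_or_gt 0 θ.toReal with h | h
  · rw [abs_of_nonneg h]
    calc ‖θ - π‖ = ‖((θ.toReal - π : ℝ) : Angle)‖ := by rw [coe_sub, coe_toReal]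
      _ ≤ _ := norm_coe_le_abs _
  · rw [abs_of_neg h]
    calc ‖θ - π‖ = ‖((θ.toReal + π : ℝ) : Angle)‖ := by
          rw [coe_add, coe_toReal, sub_eq_add_neg, neg_coe_pi]
      _ ≤ |θ.toReal + π| := norm_coe_le_abs _
      _ = |-θ.toReal - π| := by rw [← abs_neg, neg_add']

theorem exists_fin_norm_coe_sub_le (ψ : ℝ) {s : ℕ} (hs : 0 < s) :
    ∃ i : Fin s, ‖((2 * π * (i : ℕ) / s - ψ : ℝ) : Angle)‖ ≤ π / s := by
  have hsR : (0 : ℝ) < s := by exact_mod_cast hs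
  set j : ℤ := round (ψ * s / (2 * π))
  have hj : 0 ≤ j % s := Int.emod_nonneg j (by exact_mod_cast hs.ne')
  have hjs : j % s < s := Int.emod_lt_of_pos j (Int.natCast_pos.2 hs)
  refine ⟨⟨(j % s).toNat, by omega⟩, ?_⟩
  have hcoe :
      ((2 * π * ((j % s).toNat : ℕ) / s : ℝ) : Angle) = ((2 * π * j / s : ℝ) : Angle) := by
    rw [angle_eq_iff_two_pi_dvd_sub]
    refine ⟨-(j / s), ?_⟩
    have hdiv : (((j % s).toNat : ℕ) : ℝ) = j - s * (j / s : ℤ) := by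
      rw [← Int.cast_natCast, Int.toNat_of_nonneg hj, Int.emod_def]; push_cast; ring
    rw [hdiv]; field_simp; push_cast; ring
  rw [coe_sub, hcoe, ← coe_sub]
  refine (norm_coe_le_abs _).trans ?_
  calc |2 * π * j / s - ψ| = 2 * π / s * |j - ψ * s / (2 * π)| := by
        rw [← abs_of_pos (by positivity : 0 < 2 * π / s), ← abs_mul]
        congr 1; field_simp
    _ ≤ 2 * π / s * (1 / 2) := by
        gcongr; rw [abs_sub_comm]; exact abs_sub_round _
    _ = π / s := by ring

end Real.Angle

def IsDiagAdj (p q : ℕ × ℕ) : Prop :=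
  (p.1 + 1 = q.1 ∨ q.1 + 1 = p.1) ∧ (p.2 + 1 = q.2 ∨ q.2 + 1 = p.2)

def chebyshevDist (p q : ℕ × ℕ) : ℕ := max (Nat.dist p.1 q.1) (Nat.dist p.2 q.2)

lemma chebyshevDist_le {B : ℕ} {p q : ℕ × ℕ} (hp : p ≤ (B, B)) (hq : q ≤ (B, B)) :
    chebyshevDist p q ≤ B := by
  rw [Prod.mk_le_mk] at hp hq
  unfold chebyshevDist Nat.dist
  omega

lemma IsDiagAdj.add_mod_two {p q : ℕ × ℕ} (h : IsDiagAdj p q) :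
    (q.1 + q.2) % 2 = (p.1 + p.2) % 2 := by
  unfold IsDiagAdj at h
  omega

lemma exists_neighbor_dist_add_one {B x a : ℕ} (hB : 0 < B) (hx : x ≤ B) (ha : a ≤ B) :
    ∃ y ≤ B, (x + 1 = y ∨ y + 1 = x) ∧
      (x ≠ a → Nat.dist y a + 1 = Nat.dist x a) ∧ (x = a → Nat.dist y a = 1) := by
  unfold Nat.dist
  rcases lt_trichotomy x a with h | rfl | h
  · exact ⟨x + 1, by omega, by omega, by omega, by omega⟩
  · rcases lt_or_ge x B with h | h
    · exact ⟨x + 1, by omega, by omega, by omega, by omega⟩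
    · exact ⟨x - 1, by omega, by omega, by omega, by omega⟩
  · exact ⟨x - 1, by omega, by omega, by omega, by omega⟩

lemma exists_diagAdj_chebyshevDist_add_one {B : ℕ} (hB : 0 < B) {p a : ℕ × ℕ}
    (hp : p ≤ (B, B)) (ha : a ≤ (B, B)) (hpar : (p.1 + p.2) % 2 = (a.1 + a.2) % 2)
    (hpa : p ≠ a) :
    ∃ q ≤ (B, B), IsDiagAdj p q ∧ chebyshevDist q a + 1 = chebyshevDist p a := by
  rw [Prod.mk_le_mk] at hp ha
  obtain ⟨y₁, hy₁, hstep₁, hne₁, heq₁⟩ := exists_neighbor_dist_add_one hB hp.1 ha.1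
  obtain ⟨y₂, hy₂, hstep₂, hne₂, heq₂⟩ := exists_neighbor_dist_add_one hB hp.2 ha.2
  refine ⟨(y₁, y₂), Prod.mk_le_mk.2 ⟨hy₁, hy₂⟩, ⟨hstep₁, hstep₂⟩, ?_⟩
  unfold chebyshevDist
  dsimp only
  by_cases h₁ : p.1 = a.1 <;> by_cases h₂ : p.2 = a.2
  · exact absurd (Prod.ext h₁ h₂) hpa
  · have := heq₁ h₁; have := hne₂ h₂
    unfold Nat.dist at *; omega
  · have := hne₁ h₁; have := heq₂ h₂
    unfold Nat.dist at *; omega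
  · have := hne₁ h₁; have := hne₂ h₂
    omega

theorem dist_le_chebyshevDist_mul {X : Type*} [PseudoMetricSpace X] {B : ℕ} (hB : 0 < B)
    {ε : ℝ} {f : ℕ × ℕ → X}
    (hf : ∀ p ≤ (B, B), ∀ q ≤ (B, B), IsDiagAdj p q → dist (f p) (f q) ≤ ε)
    {p a : ℕ × ℕ} (hp : p ≤ (B, B)) (ha : a ≤ (B, B))
    (hpar : (p.1 + p.2) % 2 = (a.1 + a.2) % 2) :
    dist (f p) (f a) ≤ chebyshevDist p a * ε := by
  induction h : chebyshevDist p a generalizing p with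
  | zero =>
    have : p = a := by
      unfold chebyshevDist Nat.dist at h
      exact Prod.ext (by omega) (by omega)
    simp [this]
  | succ n ih =>
    have hpa : p ≠ a := by rintro rfl; simp [chebyshevDist] at h
    obtain ⟨q, hq, hpq, hqa⟩ := exists_diagAdj_chebyshevDist_add_one hB hp ha hpar hpa
    calc dist (f p) (f a) ≤ dist (f p) (f q) + dist (f q) (f a) := dist_triangle _ _ _
      _ ≤ ε + n * ε :=
        add_le_add (hf p hp q hq hpq) (ih hq (hpq.add_mod_two.trans hpar) (by omega))
      _ = (n + 1 : ℕ) * ε := by push_cast; ring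

def site (L : ℕ) (p : ℕ × ℕ) : Torus L := ((p.1 : ZMod L), (p.2 : ZMod L))

section Block

variable {L B : ℕ}

lemma val_site (hBL : B < L) {p : ℕ × ℕ} (hp : p ≤ (B, B)) :
    (site L p).1.val = p.1 ∧ (site L p).2.val = p.2 := by
  rw [Prod.mk_le_mk] at hp
  exact ⟨ZMod.val_natCast_of_lt (by omega), ZMod.val_natCast_of_lt (by omega)⟩

lemma inBlock_site (hBL : B < L) {p : ℕ × ℕ} (hp : p ≤ (B, B)) : inBlock L B (site L p) := by
  rw [inBlock, (val_site hBL hp).1, (val_site hBL hp).2]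
  exact hp

lemma site_val [NeZero L] (r : Torus L) : site L (r.1.val, r.2.val) = r :=
  Prod.ext (ZMod.natCast_zmod_val r.1) (ZMod.natCast_zmod_val r.2)

lemma IsDiagAdj.site {p q : ℕ × ℕ} (h : IsDiagAdj p q) :
    site L q = site L p + (1, 1) ∨ site L q = site L p + (1, -1) ∨
      site L p = site L q + (1, 1) ∨ site L p = site L q + (1, -1) := by
  rcases h with ⟨h₁ | h₁, h₂ | h₂⟩ <;> simp only [_root_.site, Prod.ext_iff, ← h₁, ← h₂] <;>
    push_cast <;> simp

lemma coe_offset_eq_add_pi (θs φs : ℝ) {r r' : Torus L} (h₁ : Even r'.1.val ↔ ¬Even r.1.val)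
    (h₂ : Even r'.2.val ↔ ¬Even r.2.val) :
    (offset L θs φs r' : Angle) = offset L θs φs r + π := by
  unfold offset
  by_cases hx : Even r.1.val <;> by_cases hy : Even r.2.val <;>
    simp [hx, hy, h₁, h₂, Angle.coe_add, add_assoc, Angle.coe_pi_add_coe_pi]

lemma norm_coe_offset_sub_le (θs φ φ' : ℝ) (r : Torus L) :
    ‖(offset L θs φ' r : Angle) - offset L θs φ r‖ ≤ ‖((φ' - φ : ℝ) : Angle)‖ := by
  unfold offset
  split_ifs <;> simp [Angle.coe_add]

lemma dist_sub_offset_le_of_notMem_BE (hBL : B < L) {Δ : ℝ} {θ : Cfg L} (hθ : θ ∉ BE L B Δ)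
    (θs φs : ℝ) {p q : ℕ × ℕ} (hp : p ≤ (B, B)) (hq : q ≤ (B, B)) (hpq : IsDiagAdj p q) :
    dist (θ (site L p) - offset L θs φs (site L p)) (θ (site L q) - offset L θs φs (site L q))
      ≤ Δ / (2 * B) := by
  have hoff : (offset L θs φs (site L q) : Angle) = offset L θs φs (site L p) + π := by
    have hflip {x y : ℕ} (h : x + 1 = y ∨ y + 1 = x) : Even y ↔ ¬Even x := by
      rcases h with rfl | rfl <;> simp [Nat.even_add_one]
    apply coe_offset_eq_add_pi
    · rw [(val_site hBL hp).1, (val_site hBL hq).1]; exact hflip hpq.1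
    · rw [(val_site hBL hp).2, (val_site hBL hq).2]; exact hflip hpq.2
  rw [dist_eq_norm, hoff, sub_sub_sub_comm, sub_add_cancel_left, sub_neg_eq_add,
    ← Angle.neg_coe_pi, ← sub_eq_add_neg]
  refine (Angle.norm_sub_coe_pi_le _).trans ?_
  by_contra! h
  exact hθ ⟨site L p, site L q, inBlock_site hBL hp, inBlock_site hBL hq, hpq.site, h.le⟩

theorem exists_norm_sub_offset_le_of_notMem_BE (hB : 0 < B) (hBL : B < L) {Δ : ℝ}
    (hΔ : 0 ≤ Δ) {θ : Cfg L} (hθ : θ ∉ BE L B Δ) :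
    ∃ θs φs : ℝ, ∀ r, inBlock L B r → ‖θ r - offset L θs φs r‖ ≤ Δ / 2 := by
  have : NeZero L := ⟨by omega⟩
  set θs := (θ (site L (0, 0))).toReal
  set φs := (θ (site L (1, 0)) - θ (site L (0, 0))).toReal
  refine ⟨θs, φs, fun r hr => ?_⟩
  set f : ℕ × ℕ → Angle := fun p => θ (site L p) - offset L θs φs (site L p) with hf_def
  have hp : (r.1.val, r.2.val) ≤ (B, B) := hr
  obtain ⟨a, ha, hpar, hfa⟩ :
      ∃ a ≤ (B, B), (r.1.val + r.2.val) % 2 = (a.1 + a.2) % 2 ∧ f a = 0 := by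
    have h₀ := val_site hBL (p := (0, 0)) (by simp)
    have h₁ := val_site hBL (p := (1, 0)) (Prod.mk_le_mk.2 ⟨hB, Nat.zero_le B⟩)
    rcases Nat.mod_two_eq_zero_or_one (r.1.val + r.2.val) with h | h
    · refine ⟨(0, 0), by simp, by simp [h], ?_⟩
      simp [hf_def, offset, h₀.1, h₀.2, θs]
    · refine ⟨(1, 0), Prod.mk_le_mk.2 ⟨hB, Nat.zero_le B⟩, by simp [h], ?_⟩
      simp [hf_def, offset, h₁.1, h₁.2, θs, φs, Angle.coe_add]
  rw [← site_val r]
  calc ‖f (r.1.val, r.2.val)‖ = dist (f (r.1.val, r.2.val)) (f a) := by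
        rw [hfa, dist_zero_right]
    _ ≤ chebyshevDist (r.1.val, r.2.val) a * (Δ / (2 * B)) := dist_le_chebyshevDist_mul hB
        (fun p hp q hq ↦ dist_sub_offset_le_of_notMem_BE hBL hθ θs φs hp hq) hp ha hpar
    _ ≤ B * (Δ / (2 * B)) := by gcongr; exact_mod_cast chebyshevDist_le hp ha
    _ = Δ / 2 := by field_simp

lemma goodDev_of_norm_sub_offset_le {Δ θs φ φ' δ η : ℝ} {θ : Cfg L}
    (hθ : ∀ r, inBlock L B r → ‖θ r - offset L θs φ r‖ ≤ δ)
    (hφ : ‖((φ' - φ : ℝ) : Angle)‖ ≤ η) (hΔ : δ + η < Δ) : goodDev L B Δ θs φ' θ := by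
  intro r hr
  rw [← Angle.norm_eq_abs_toReal]
  calc ‖θ r - offset L θs φ' r‖
      ≤ ‖θ r - offset L θs φ r‖ + ‖(offset L θs φ' r : Angle) - offset L θs φ r‖ := by
        rw [← sub_sub_sub_cancel_right (θ r) _ (offset L θs φ r : Angle)]
        exact norm_sub_le _ _
    _ ≤ δ + η := add_le_add (hθ r hr) ((norm_coe_offset_sub_le θs φ φ' r).trans hφ)
    _ < Δ := hΔ

end Block

theorem BSW_covering_general (L B s : ℕ) (hB : 0 < B)
    (hLB : ∃ m : ℕ, 0 < m ∧ L = 2 * m * B)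
    (κ Δ : ℝ) (hΔ : 0 < Δ) (hs : 4 * π < (s : ℝ) * Δ) :
    BSW L B κ Δ ⊆ ⋃ i : Fin s, BSWi L B κ Δ (2 * π * ((i : ℕ) : ℝ) / (s : ℝ)) := by
  have hBL : B < L := by
    obtain ⟨m, hm, rfl⟩ := hLB
    nlinarith
  have hs₀ : 0 < s := Nat.pos_of_ne_zero <| by
    rintro rfl
    simp only [CharP.cast_eq_zero, zero_mul] at hs
    linarith [pi_pos]
  have hπs : π / s < Δ / 2 := by
    rw [div_lt_iff₀ (by exact_mod_cast hs₀)]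
    linarith [pi_pos]
  rintro θ ⟨hbad, hθ⟩
  obtain ⟨θs, φs, hdev⟩ := exists_norm_sub_offset_le_of_notMem_BE hB hBL hΔ.le hθ
  obtain ⟨i, hi⟩ := Angle.exists_fin_norm_coe_sub_le φs hs₀
  exact Set.mem_iUnion.2 ⟨i, hbad, θs, goodDev_of_norm_sub_offset_le hdev hi (by linarith)⟩

/-- with `s` uniformly spaced angles `φ*_i = 2πi/s` and `sΔ > 4π`, the
event `B_SW` is covered by the events `B_SW^{(i)}`, `i = 1, …, s`. -/
theorem BSW_covering (L B s : ℕ) (hL : L ≠ 0) (hB : 0 < B)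
    (hLB : ∃ m : ℕ, 0 < m ∧ L = 2 * m * B) (h4 : 4 ∣ L)
    (κ Δ : ℝ) (hκ : 0 < κ) (hΔ : 0 < Δ) (hs : 4 * π < (s : ℝ) * Δ) :
    BSW L B κ Δ ⊆ ⋃ i : Fin s, BSWi L B κ Δ (2 * π * ((i : ℕ) : ℝ) / (s : ℝ)) :=
  BSW_covering_general L B s hB hLB κ Δ hΔ hs
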